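/- arXiv:math/0506164 — 6 statements merged into one kernel-verified Lean document; each statement's English description precedes it below -/
import Mathlib

section
/- Let Ω ⊆ ℂ be open and let Ã_z, Ã_z̄ : Ω → Matrix n n ℂ be smooth. Then the following are equivalent: (i) for every λ ∈ ℂ with λ ≠ 0, the curvature of the λ-family of connections vanishes on Ω, i.e. (1 − λ⁻¹)∂_z̄Ã_z − (1 − λ)∂_zÃ_z̄ + (1 − λ)(1 − λ⁻¹)[Ã_z̄, Ã_z] = 0; (ii) ∂_zÃ_z̄ = [Ã_z̄, Ã_z] and ∂_z̄Ã_z = [Ã_z, Ã_z̄] hold on Ω. -/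
open Complex Matrix

noncomputable section

/-- Wirtinger derivative `∂_z` of a ℂ-valued function of one complex variable,
viewed as a function of two real variables:  `∂_z F = ½(∂_x F − i ∂_y F)`. -/
def wdz (f : ℂ → ℂ) (z : ℂ) : ℂ :=
  (1 / 2 : ℂ) * (fderiv ℝ f z 1 - Complex.I * fderiv ℝ f z Complex.I)

/-- Wirtinger derivative `∂_z̄ F = ½(∂_x F + i ∂_y F)`. -/
def wdzbar (f : ℂ → ℂ) (z : ℂ) : ℂ :=
  (1 / 2 : ℂ) * (fderiv ℝ f z 1 + Complex.I * fderiv ℝ f z Complex.I)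

/-- Entrywise Wirtinger derivative `∂_z` for matrix-valued functions. -/
def mdz {n m : Type*} (F : ℂ → Matrix n m ℂ) (z : ℂ) : Matrix n m ℂ :=
  Matrix.of fun i j => wdz (fun w => F w i j) z

/-- Entrywise Wirtinger derivative `∂_z̄` for matrix-valued functions. -/
def mdzbar {n m : Type*} (F : ℂ → Matrix n m ℂ) (z : ℂ) : Matrix n m ℂ :=
  Matrix.of fun i j => wdzbar (fun w => F w i j) z

/-- A matrix-valued function is smooth on a set if each entry is `C^∞`
as a function of the two real variables. -/
def MSmoothOn {n m : Type*} (F : ℂ → Matrix n m ℂ) (Ω : Set ℂ) : Prop :=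
  ∀ i j, ContDiffOn ℝ (⊤ : ℕ∞) (fun z => F z i j) Ω

/-- For smooth matrix-valued `Ã_z, Ã_z̄` on an open set `Ω ⊆ ℂ`,
the λ-family of connections is flat for every `λ ≠ 0` iff
`∂_z Ã_z̄ = [Ã_z̄, Ã_z]` and `∂_z̄ Ã_z = [Ã_z, Ã_z̄]` on `Ω`. -/
theorem stmt0 {n : Type*} [Fintype n] [DecidableEq n]
    (Ω : Set ℂ) (hΩ : IsOpen Ω)
    (Az Azb : ℂ → Matrix n n ℂ)
    (hAz : MSmoothOn Az Ω) (hAzb : MSmoothOn Azb Ω) :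
    (∀ lam : ℂ, lam ≠ 0 → ∀ z ∈ Ω,
        (1 - lam⁻¹) • mdzbar Az z - (1 - lam) • mdz Azb z
          + ((1 - lam) * (1 - lam⁻¹)) • (Azb z * Az z - Az z * Azb z) = 0)
      ↔ (∀ z ∈ Ω,
          mdz Azb z = Azb z * Az z - Az z * Azb z
            ∧ mdzbar Az z = Az z * Azb z - Azb z * Az z) := by
  constructor
  · intro h z hz
    have h1 := h (-1) (by norm_num) z hz
    have h2 := h 2 (by norm_num) z hz
    norm_num at h1 h2
    constructor
    · linear_combination (norm := module) (-1/6 : ℂ) • h1 + (2/3 : ℂ) • h2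
    · linear_combination (norm := module) (1/3 : ℂ) • h1 + (2/3 : ℂ) • h2
  · intro h lam hlam z hz
    obtain ⟨h1, h2⟩ := h z hz
    rw [h1, h2]
    match_scalars <;> field_simp <;> ring
end
end

section
/- Let Ω ⊆ ℂ be open and let s : Ω → Matrix n n ℂ be smooth with s(z) invertible for every z ∈ Ω. Define Ã_z := ½ s⁻¹ ∂_z s and Ã_z̄ := ½ s⁻¹ ∂_z̄ s. Then s satisfies the harmonic map equation ∂_z(s⁻¹ ∂_z̄ s) + ∂_z̄(s⁻¹ ∂_z s) = 0 on Ω if and only if for every λ ∈ ℂ with λ ≠ 0 the identity (1 − λ⁻¹)∂_z̄Ã_z − (1 − λ)∂_zÃ_z̄ + (1 − λ)(1 − λ⁻¹)[Ã_z̄, Ã_z] = 0 holds on Ω. -/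
open Complex Matrix

open scoped ContDiff

noncomputable section

/-! ### Auxiliary lemmas -/

section Aux

variable {f g : ℂ → ℂ} {z : ℂ} {Ω : Set ℂ}

lemma one_le_inf : (1 : WithTop ℕ∞) ≤ ∞ := by exact_mod_cast le_top

lemma two_le_inf : (2 : WithTop ℕ∞) ≤ ∞ := by
  rw [show (2 : WithTop ℕ∞) = ((2 : ℕ∞) : WithTop ℕ∞) from rfl]
  exact WithTop.coe_le_coe.mpr le_top

lemma inf_add_one_le : (∞ : WithTop ℕ∞) + 1 ≤ ∞ := by
  exact_mod_cast le_top

lemma ContDiffOn.diffAt {E : Type*} [NormedAddCommGroup E] [NormedSpace ℝ E] {f : ℂ → E}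
    (h : ContDiffOn ℝ ∞ f Ω) (hΩ : IsOpen Ω) (hz : z ∈ Ω) :
    DifferentiableAt ℝ f z :=
  ((h z hz).contDiffAt (hΩ.mem_nhds hz)).differentiableAt (by simp)

lemma wdz_sum {ι : Type*} {u : Finset ι} {F : ι → ℂ → ℂ}
    (h : ∀ i ∈ u, DifferentiableAt ℝ (F i) z) :
    wdz (fun w => ∑ i ∈ u, F i w) z = ∑ i ∈ u, wdz (F i) z := by
  unfold wdz
  rw [fderiv_fun_sum h]
  simp only [ContinuousLinearMap.coe_sum', Finset.sum_apply]
  rw [Finset.mul_sum, ← Finset.sum_sub_distrib, Finset.mul_sum]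

lemma wdzbar_sum {ι : Type*} {u : Finset ι} {F : ι → ℂ → ℂ}
    (h : ∀ i ∈ u, DifferentiableAt ℝ (F i) z) :
    wdzbar (fun w => ∑ i ∈ u, F i w) z = ∑ i ∈ u, wdzbar (F i) z := by
  unfold wdzbar
  rw [fderiv_fun_sum h]
  simp only [ContinuousLinearMap.coe_sum', Finset.sum_apply]
  rw [Finset.mul_sum, ← Finset.sum_add_distrib, Finset.mul_sum]

lemma wdz_mul (hf : DifferentiableAt ℝ f z) (hg : DifferentiableAt ℝ g z) :
    wdz (fun w => f w * g w) z = wdz f z * g z + f z * wdz g z := by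
  unfold wdz
  rw [fderiv_fun_mul hf hg]
  simp only [ContinuousLinearMap.add_apply, ContinuousLinearMap.smul_apply, smul_eq_mul]
  ring

lemma wdzbar_mul (hf : DifferentiableAt ℝ f z) (hg : DifferentiableAt ℝ g z) :
    wdzbar (fun w => f w * g w) z = wdzbar f z * g z + f z * wdzbar g z := by
  unfold wdzbar
  rw [fderiv_fun_mul hf hg]
  simp only [ContinuousLinearMap.add_apply, ContinuousLinearMap.smul_apply, smul_eq_mul]
  ring

lemma wdz_const_mul (c : ℂ) (hf : DifferentiableAt ℝ f z) :
    wdz (fun w => c * f w) z = c * wdz f z := by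
  unfold wdz
  rw [fderiv_const_mul hf c]
  simp only [ContinuousLinearMap.smul_apply, smul_eq_mul]
  ring

lemma wdzbar_const_mul (c : ℂ) (hf : DifferentiableAt ℝ f z) :
    wdzbar (fun w => c * f w) z = c * wdzbar f z := by
  unfold wdzbar
  rw [fderiv_const_mul hf c]
  simp only [ContinuousLinearMap.smul_apply, smul_eq_mul]
  ring

lemma wdz_congr_nhds {c : ℂ} (h : f =ᶠ[nhds z] fun _ => c) : wdz f z = 0 := by
  unfold wdz
  rw [h.fderiv_eq, fderiv_fun_const]
  simp

lemma wdzbar_congr_nhds {c : ℂ} (h : f =ᶠ[nhds z] fun _ => c) : wdzbar f z = 0 := by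
  unfold wdzbar
  rw [h.fderiv_eq, fderiv_fun_const]
  simp

lemma contDiffOn_wdz (hf : ContDiffOn ℝ ∞ f Ω) (hΩ : IsOpen Ω) :
    ContDiffOn ℝ ∞ (wdz f) Ω := by
  have h1 : ContDiffOn ℝ ∞ (fderiv ℝ f) Ω := hf.fderiv_of_isOpen hΩ inf_add_one_le
  have h2 : ∀ v : ℂ, ContDiffOn ℝ ∞ (fun w => fderiv ℝ f w v) Ω :=
    fun v => h1.clm_apply contDiffOn_const
  unfold wdz
  exact contDiffOn_const.mul (((h2 1).sub (contDiffOn_const.mul (h2 Complex.I))))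

lemma contDiffOn_wdzbar (hf : ContDiffOn ℝ ∞ f Ω) (hΩ : IsOpen Ω) :
    ContDiffOn ℝ ∞ (wdzbar f) Ω := by
  have h1 : ContDiffOn ℝ ∞ (fderiv ℝ f) Ω := hf.fderiv_of_isOpen hΩ inf_add_one_le
  have h2 : ∀ v : ℂ, ContDiffOn ℝ ∞ (fun w => fderiv ℝ f w v) Ω :=
    fun v => h1.clm_apply contDiffOn_const
  unfold wdzbar
  exact contDiffOn_const.mul (((h2 1).add (contDiffOn_const.mul (h2 Complex.I))))

lemma fderiv_entry_apply (hder : DifferentiableAt ℝ (fderiv ℝ f) z) (v u : ℂ) :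
    fderiv ℝ (fun w => fderiv ℝ f w v) z u = fderiv ℝ (fderiv ℝ f) z u v := by
  rw [fderiv_clm_apply hder (differentiableAt_const v)]
  simp

lemma fderiv_wdzbar_apply (hder : DifferentiableAt ℝ (fderiv ℝ f) z) (u : ℂ) :
    fderiv ℝ (wdzbar f) z u
      = (1 / 2 : ℂ) * (fderiv ℝ (fderiv ℝ f) z u 1
          + Complex.I * fderiv ℝ (fderiv ℝ f) z u Complex.I) := by
  have hDv : ∀ v : ℂ, DifferentiableAt ℝ (fun w => fderiv ℝ f w v) z :=
    fun v => hder.clm_apply (differentiableAt_const v)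
  have h1 := hDv 1
  have hI := hDv Complex.I
  have hrw : wdzbar f = fun w =>
      (1 / 2 : ℂ) * (fderiv ℝ f w 1 + Complex.I * fderiv ℝ f w Complex.I) := rfl
  rw [hrw, fderiv_const_mul (h1.fun_add (hI.const_mul Complex.I)),
    fderiv_fun_add h1 (hI.const_mul Complex.I), fderiv_const_mul hI]
  simp only [ContinuousLinearMap.smul_apply, ContinuousLinearMap.add_apply, smul_eq_mul]
  rw [fderiv_entry_apply hder, fderiv_entry_apply hder]

lemma fderiv_wdz_apply (hder : DifferentiableAt ℝ (fderiv ℝ f) z) (u : ℂ) :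
    fderiv ℝ (wdz f) z u
      = (1 / 2 : ℂ) * (fderiv ℝ (fderiv ℝ f) z u 1
          - Complex.I * fderiv ℝ (fderiv ℝ f) z u Complex.I) := by
  have hDv : ∀ v : ℂ, DifferentiableAt ℝ (fun w => fderiv ℝ f w v) z :=
    fun v => hder.clm_apply (differentiableAt_const v)
  have h1 := hDv 1
  have hI := hDv Complex.I
  have hrw : wdz f = fun w =>
      (1 / 2 : ℂ) * (fderiv ℝ f w 1 - Complex.I * fderiv ℝ f w Complex.I) := rfl
  rw [hrw, fderiv_const_mul (h1.fun_sub (hI.const_mul Complex.I)),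
    fderiv_fun_sub h1 (hI.const_mul Complex.I), fderiv_const_mul hI]
  simp only [ContinuousLinearMap.smul_apply, ContinuousLinearMap.sub_apply, smul_eq_mul]
  rw [fderiv_entry_apply hder, fderiv_entry_apply hder]

/-- Mixed Wirtinger derivatives commute for smooth functions. -/
lemma wdz_wdzbar_comm (hf : ContDiffOn ℝ ∞ f Ω) (hΩ : IsOpen Ω) (hz : z ∈ Ω) :
    wdz (wdzbar f) z = wdzbar (wdz f) z := by
  have h1 : ContDiffOn ℝ ∞ (fderiv ℝ f) Ω := hf.fderiv_of_isOpen hΩ inf_add_one_le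
  have hder : DifferentiableAt ℝ (fderiv ℝ f) z := h1.diffAt hΩ hz
  have hsymm : ∀ u v : ℂ, fderiv ℝ (fderiv ℝ f) z u v = fderiv ℝ (fderiv ℝ f) z v u :=
    ((hf z hz).contDiffAt (hΩ.mem_nhds hz)).isSymmSndFDerivAt (by rw [minSmoothness_of_isRCLikeNormedField]; exact two_le_inf)
  show (1 / 2 : ℂ) * (fderiv ℝ (wdzbar f) z 1 - Complex.I * fderiv ℝ (wdzbar f) z Complex.I)
      = (1 / 2 : ℂ) * (fderiv ℝ (wdz f) z 1 + Complex.I * fderiv ℝ (wdz f) z Complex.I)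
  rw [fderiv_wdzbar_apply hder, fderiv_wdzbar_apply hder, fderiv_wdz_apply hder,
    fderiv_wdz_apply hder, hsymm Complex.I 1]
  ring

lemma contDiffOn_finset_sum {ι : Type*} {u : Finset ι} {F : ι → ℂ → ℂ}
    (h : ∀ i ∈ u, ContDiffOn ℝ ∞ (F i) Ω) :
    ContDiffOn ℝ ∞ (fun w => ∑ i ∈ u, F i w) Ω := by
  classical
  induction u using Finset.induction_on with
  | empty => simpa using contDiffOn_const
  | insert _ _ hni ih =>
    simp only [Finset.sum_insert hni]
    exact (h _ (Finset.mem_insert_self _ _)).add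
      (ih fun i hi => h i (Finset.mem_insert_of_mem hi))

lemma contDiffOn_finset_prod {ι : Type*} {u : Finset ι} {F : ι → ℂ → ℂ}
    (h : ∀ i ∈ u, ContDiffOn ℝ ∞ (F i) Ω) :
    ContDiffOn ℝ ∞ (fun w => ∏ i ∈ u, F i w) Ω := by
  classical
  induction u using Finset.induction_on with
  | empty => simpa using contDiffOn_const
  | insert _ _ hni ih =>
    simp only [Finset.prod_insert hni]
    exact (h _ (Finset.mem_insert_self _ _)).mul
      (ih fun i hi => h i (Finset.mem_insert_of_mem hi))

end Aux

section MatrixAux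

variable {n : Type*} [Fintype n] [DecidableEq n] {z : ℂ} {Ω : Set ℂ}

lemma contDiffOn_det {M : ℂ → Matrix n n ℂ}
    (h : ∀ i j, ContDiffOn ℝ ∞ (fun w => M w i j) Ω) :
    ContDiffOn ℝ ∞ (fun w => (M w).det) Ω := by
  simp only [Matrix.det_apply']
  exact contDiffOn_finset_sum fun σ _ =>
    contDiffOn_const.mul (contDiffOn_finset_prod fun i _ => h (σ i) i)

lemma mdz_mul {F G : ℂ → Matrix n n ℂ}
    (hF : ∀ i j, DifferentiableAt ℝ (fun w => F w i j) z)
    (hG : ∀ i j, DifferentiableAt ℝ (fun w => G w i j) z) :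
    mdz (fun w => F w * G w) z = mdz F z * G z + F z * mdz G z := by
  ext i j
  simp only [mdz, Matrix.of_apply, Matrix.add_apply, Matrix.mul_apply]
  rw [wdz_sum fun k _ => (hF i k).fun_mul (hG k j), ← Finset.sum_add_distrib]
  exact Finset.sum_congr rfl fun k _ => wdz_mul (hF i k) (hG k j)

lemma mdzbar_mul {F G : ℂ → Matrix n n ℂ}
    (hF : ∀ i j, DifferentiableAt ℝ (fun w => F w i j) z)
    (hG : ∀ i j, DifferentiableAt ℝ (fun w => G w i j) z) :
    mdzbar (fun w => F w * G w) z = mdzbar F z * G z + F z * mdzbar G z := by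
  ext i j
  simp only [mdzbar, Matrix.of_apply, Matrix.add_apply, Matrix.mul_apply]
  rw [wdzbar_sum fun k _ => (hF i k).fun_mul (hG k j), ← Finset.sum_add_distrib]
  exact Finset.sum_congr rfl fun k _ => wdzbar_mul (hF i k) (hG k j)

lemma mdz_const_smul {F : ℂ → Matrix n n ℂ} (c : ℂ)
    (hF : ∀ i j, DifferentiableAt ℝ (fun w => F w i j) z) :
    mdz (fun w => c • F w) z = c • mdz F z := by
  ext i j
  simp only [mdz, Matrix.of_apply, Matrix.smul_apply, smul_eq_mul]
  exact wdz_const_mul c (hF i j)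

lemma mdzbar_const_smul {F : ℂ → Matrix n n ℂ} (c : ℂ)
    (hF : ∀ i j, DifferentiableAt ℝ (fun w => F w i j) z) :
    mdzbar (fun w => c • F w) z = c • mdzbar F z := by
  ext i j
  simp only [mdzbar, Matrix.of_apply, Matrix.smul_apply, smul_eq_mul]
  exact wdzbar_const_mul c (hF i j)

end MatrixAux

/-- For a smooth invertible-matrix-valued `s` on an open `Ω ⊆ ℂ`, with
`Ã_z := ½ s⁻¹ ∂_z s` and `Ã_z̄ := ½ s⁻¹ ∂_z̄ s`, the harmonic map equation
`∂_z(s⁻¹∂_z̄ s) + ∂_z̄(s⁻¹∂_z s) = 0` holds on `Ω` iff for every `λ ≠ 0` the curvature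
`(1 − λ⁻¹)∂_z̄ Ã_z − (1 − λ)∂_z Ã_z̄ + (1 − λ)(1 − λ⁻¹)[Ã_z̄, Ã_z]` vanishes on `Ω`. -/
theorem stmt1 {n : Type*} [Fintype n] [DecidableEq n]
    (Ω : Set ℂ) (hΩ : IsOpen Ω) (s : ℂ → Matrix n n ℂ)
    (hs : MSmoothOn s Ω) (hinv : ∀ z ∈ Ω, IsUnit (s z))
    (Atz Atzb : ℂ → Matrix n n ℂ)
    (hAtz : ∀ z, Atz z = (1 / 2 : ℂ) • ((s z)⁻¹ * mdz s z))
    (hAtzb : ∀ z, Atzb z = (1 / 2 : ℂ) • ((s z)⁻¹ * mdzbar s z)) :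
    (∀ z ∈ Ω,
        mdz (fun w => (s w)⁻¹ * mdzbar s w) z
          + mdzbar (fun w => (s w)⁻¹ * mdz s w) z = 0)
      ↔ (∀ lam : ℂ, lam ≠ 0 → ∀ z ∈ Ω,
          (1 - lam⁻¹) • mdzbar Atz z - (1 - lam) • mdz Atzb z
            + ((1 - lam) * (1 - lam⁻¹)) • (Atzb z * Atz z - Atz z * Atzb z) = 0) := by
  -- smoothness of entries
  have hsE : ∀ i j, ContDiffOn ℝ ∞ (fun w => s w i j) Ω := fun i j => (hs i j).of_le (by simp)
  have hdetne : ∀ z ∈ Ω, (s z).det ≠ 0 := fun z hz =>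
    (Matrix.isUnit_iff_isUnit_det (s z)).mp (hinv z hz) |>.ne_zero
  -- entries of s⁻¹ are smooth on Ω
  have hinvE : ∀ i j, ContDiffOn ℝ ∞ (fun w => (s w)⁻¹ i j) Ω := by
    intro i j
    have hadj : ContDiffOn ℝ ∞ (fun w => (s w).adjugate i j) Ω := by
      simp only [Matrix.adjugate_apply]
      apply contDiffOn_det
      intro k l
      rcases eq_or_ne k j with rfl | hkj
      · simpa [Matrix.updateRow_apply] using contDiffOn_const
      · simpa [Matrix.updateRow_apply, hkj] using hsE k l
    have : (fun w => (s w)⁻¹ i j)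
        = fun w => ((s w).det)⁻¹ * (s w).adjugate i j := by
      funext w
      rw [Matrix.inv_def]
      simp [Matrix.smul_apply, Ring.inverse_eq_inv', smul_eq_mul]
    rw [this]
    exact ((contDiffOn_det hsE).inv hdetne).mul hadj
  -- entries of ∂z s and ∂z̄ s are smooth on Ω
  have hdzE : ∀ i j, ContDiffOn ℝ ∞ (fun w => mdz s w i j) Ω := fun i j =>
    contDiffOn_wdz (hsE i j) hΩ
  have hdzbE : ∀ i j, ContDiffOn ℝ ∞ (fun w => mdzbar s w i j) Ω := fun i j =>
    contDiffOn_wdzbar (hsE i j) hΩ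
  -- differentiability at points of Ω
  have dsE : ∀ z ∈ Ω, ∀ i j, DifferentiableAt ℝ (fun w => s w i j) z :=
    fun z hz i j => (hsE i j).diffAt hΩ hz
  have dinvE : ∀ z ∈ Ω, ∀ i j, DifferentiableAt ℝ (fun w => (s w)⁻¹ i j) z :=
    fun z hz i j => (hinvE i j).diffAt hΩ hz
  have ddzE : ∀ z ∈ Ω, ∀ i j, DifferentiableAt ℝ (fun w => mdz s w i j) z :=
    fun z hz i j => (hdzE i j).diffAt hΩ hz
  have ddzbE : ∀ z ∈ Ω, ∀ i j, DifferentiableAt ℝ (fun w => mdzbar s w i j) z :=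
    fun z hz i j => (hdzbE i j).diffAt hΩ hz
  -- derivative of the inverse
  have hmdz_inv : ∀ z ∈ Ω, mdz (fun w => (s w)⁻¹) z
      = -(((s z)⁻¹ * mdz s z) * (s z)⁻¹) := by
    intro z hz
    have hconst : mdz (fun w => (s w)⁻¹ * s w) z = 0 := by
      ext i j
      simp only [mdz, Matrix.of_apply, Matrix.zero_apply]
      apply wdz_congr_nhds (c := (1 : Matrix n n ℂ) i j)
      filter_upwards [hΩ.mem_nhds hz] with w hw
      rw [Matrix.nonsing_inv_mul _ ((Matrix.isUnit_iff_isUnit_det (s w)).mp (hinv w hw))]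
    rw [mdz_mul (dinvE z hz) (dsE z hz)] at hconst
    have h1 : mdz (fun w => (s w)⁻¹) z * s z = -((s z)⁻¹ * mdz s z) := by
      linear_combination (norm := noncomm_ring) hconst
    calc mdz (fun w => (s w)⁻¹) z
        = mdz (fun w => (s w)⁻¹) z * (s z * (s z)⁻¹) := by
          rw [Matrix.mul_nonsing_inv _ ((Matrix.isUnit_iff_isUnit_det (s z)).mp (hinv z hz)),
            mul_one]
      _ = (mdz (fun w => (s w)⁻¹) z * s z) * (s z)⁻¹ := by rw [mul_assoc]
      _ = -(((s z)⁻¹ * mdz s z) * (s z)⁻¹) := by rw [h1]; noncomm_ring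
  have hmdzbar_inv : ∀ z ∈ Ω, mdzbar (fun w => (s w)⁻¹) z
      = -(((s z)⁻¹ * mdzbar s z) * (s z)⁻¹) := by
    intro z hz
    have hconst : mdzbar (fun w => (s w)⁻¹ * s w) z = 0 := by
      ext i j
      simp only [mdzbar, Matrix.of_apply, Matrix.zero_apply]
      apply wdzbar_congr_nhds (c := (1 : Matrix n n ℂ) i j)
      filter_upwards [hΩ.mem_nhds hz] with w hw
      rw [Matrix.nonsing_inv_mul _ ((Matrix.isUnit_iff_isUnit_det (s w)).mp (hinv w hw))]
    rw [mdzbar_mul (dinvE z hz) (dsE z hz)] at hconst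
    have h1 : mdzbar (fun w => (s w)⁻¹) z * s z = -((s z)⁻¹ * mdzbar s z) := by
      linear_combination (norm := noncomm_ring) hconst
    calc mdzbar (fun w => (s w)⁻¹) z
        = mdzbar (fun w => (s w)⁻¹) z * (s z * (s z)⁻¹) := by
          rw [Matrix.mul_nonsing_inv _ ((Matrix.isUnit_iff_isUnit_det (s z)).mp (hinv z hz)),
            mul_one]
      _ = (mdzbar (fun w => (s w)⁻¹) z * s z) * (s z)⁻¹ := by rw [mul_assoc]
      _ = -(((s z)⁻¹ * mdzbar s z) * (s z)⁻¹) := by rw [h1]; noncomm_ring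
  -- mixed derivatives commute
  have hmix : ∀ z ∈ Ω, mdz (fun w => mdzbar s w) z = mdzbar (fun w => mdz s w) z := by
    intro z hz
    ext i j
    simp only [mdz, mdzbar, Matrix.of_apply]
    exact wdz_wdzbar_comm (hsE i j) hΩ hz
  -- abbreviations
  set A : ℂ → Matrix n n ℂ := fun w => (s w)⁻¹ * mdz s w with hA
  set B : ℂ → Matrix n n ℂ := fun w => (s w)⁻¹ * mdzbar s w with hB
  -- expansions of the harmonic-map-equation terms
  have hY : ∀ z ∈ Ω, mdz B z = -(A z * B z) + (s z)⁻¹ * mdz (fun w => mdzbar s w) z := by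
    intro z hz
    have := mdz_mul (F := fun w => (s w)⁻¹) (G := fun w => mdzbar s w)
      (dinvE z hz) (ddzbE z hz)
    rw [hB, this, hmdz_inv z hz]
    simp only [hA]
    noncomm_ring
  have hX : ∀ z ∈ Ω, mdzbar A z = -(B z * A z) + (s z)⁻¹ * mdz (fun w => mdzbar s w) z := by
    intro z hz
    have := mdzbar_mul (F := fun w => (s w)⁻¹) (G := fun w => mdz s w)
      (dinvE z hz) (ddzE z hz)
    rw [hA, this, hmdzbar_inv z hz, ← hmix z hz]
    simp only [hB]
    noncomm_ring
  -- curvature identity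
  have hcurv : ∀ z ∈ Ω, mdzbar A z - mdz B z = A z * B z - B z * A z := by
    intro z hz
    rw [hX z hz, hY z hz]
    noncomm_ring
  -- derivatives of Atz, Atzb
  have dAE : ∀ z ∈ Ω, ∀ i j, DifferentiableAt ℝ (fun w => A w i j) z := by
    intro z hz i j
    have : (fun w => A w i j) = fun w => ∑ k, (s w)⁻¹ i k * mdz s w k j := by
      funext w; simp [hA, Matrix.mul_apply]
    rw [this]
    exact DifferentiableAt.fun_sum fun k _ => (dinvE z hz i k).fun_mul (ddzE z hz k j)
  have dBE : ∀ z ∈ Ω, ∀ i j, DifferentiableAt ℝ (fun w => B w i j) z := by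
    intro z hz i j
    have : (fun w => B w i j) = fun w => ∑ k, (s w)⁻¹ i k * mdzbar s w k j := by
      funext w; simp [hB, Matrix.mul_apply]
    rw [this]
    exact DifferentiableAt.fun_sum fun k _ => (dinvE z hz i k).fun_mul (ddzbE z hz k j)
  have hAtzF : Atz = fun w => (1 / 2 : ℂ) • A w := funext fun w => hAtz w
  have hAtzbF : Atzb = fun w => (1 / 2 : ℂ) • B w := funext fun w => hAtzb w
  have hdAtz : ∀ z ∈ Ω, mdzbar Atz z = (1 / 2 : ℂ) • mdzbar A z := by
    intro z hz
    rw [hAtzF]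
    exact mdzbar_const_smul _ (dAE z hz)
  have hdAtzb : ∀ z ∈ Ω, mdz Atzb z = (1 / 2 : ℂ) • mdz B z := by
    intro z hz
    rw [hAtzbF]
    exact mdz_const_smul _ (dBE z hz)
  -- key identity
  have hkey : ∀ lam : ℂ, lam ≠ 0 → ∀ z ∈ Ω,
      (1 - lam⁻¹) • mdzbar Atz z - (1 - lam) • mdz Atzb z
        + ((1 - lam) * (1 - lam⁻¹)) • (Atzb z * Atz z - Atz z * Atzb z)
      = ((lam - lam⁻¹) / 4) • (mdz B z + mdzbar A z) := by
    intro lam hlam z hz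
    have hcomm : Atzb z * Atz z - Atz z * Atzb z
        = (1 / 4 : ℂ) • (mdz B z - mdzbar A z) := by
      rw [hAtz z, hAtzb z]
      have : ((1 / 2 : ℂ) • B z) * ((1 / 2 : ℂ) • A z)
          - ((1 / 2 : ℂ) • A z) * ((1 / 2 : ℂ) • B z)
          = (1 / 4 : ℂ) • (B z * A z - A z * B z) := by
        rw [smul_mul_assoc, smul_mul_assoc, mul_smul_comm, mul_smul_comm,
          smul_smul, smul_smul, ← smul_sub]
        norm_num
      rw [this]
      congr 1
      have := hcurv z hz
      linear_combination (norm := noncomm_ring) this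
    rw [hdAtz z hz, hdAtzb z hz, hcomm]
    match_scalars <;> field_simp <;> ring
  constructor
  · intro hH lam hlam z hz
    rw [hkey lam hlam z hz, hH z hz, smul_zero]
  · intro hE z hz
    have h2 := hE 2 (by norm_num) z hz
    rw [hkey 2 (by norm_num) z hz] at h2
    have hc : ((2 : ℂ) - 2⁻¹) / 4 ≠ 0 := by norm_num
    exact (smul_eq_zero.mp h2).resolve_left hc
end
end

section
/- Let A, B ∈ Matrix (Fin 2) (Fin 2) ℂ both have trace zero. If the commutator AB − BA is a diagonal matrix, then either both A and B have all diagonal entries equal to zero (A and B are off-diagonal), or AB − BA = 0. -/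
open Complex Matrix

noncomputable section

/-- if `A, B` are traceless `2×2` complex matrices and the commutator
`AB − BA` is diagonal, then either both `A` and `B` are off-diagonal (both diagonal
entries vanish) or `AB − BA = 0`. -/
theorem stmt5 (A B : Matrix (Fin 2) (Fin 2) ℂ)
    (hA : A.trace = 0) (hB : B.trace = 0)
    (hdiag : ∀ i j : Fin 2, i ≠ j → (A * B - B * A) i j = 0) :
    ((∀ i : Fin 2, A i i = 0) ∧ (∀ i : Fin 2, B i i = 0)) ∨ A * B - B * A = 0 := by
  have hA' : A 1 1 = - A 0 0 := by
    have := hA; simp [Matrix.trace, Fin.sum_univ_two, Matrix.diag] at this; linear_combination this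
  have hB' : B 1 1 = - B 0 0 := by
    have := hB; simp [Matrix.trace, Fin.sum_univ_two, Matrix.diag] at this; linear_combination this
  have h1 := hdiag 0 1 (by decide)
  have h2 := hdiag 1 0 (by decide)
  simp [Matrix.sub_apply, Matrix.mul_apply, Fin.sum_univ_two, hA', hB'] at h1 h2
  have finish : A 0 1 * B 1 0 - B 0 1 * A 1 0 = 0 → A * B - B * A = 0 := by
    intro ht
    ext i j
    fin_cases i <;> fin_cases j <;>
      simp [Matrix.sub_apply, Matrix.mul_apply, Fin.sum_univ_two, hA', hB'] <;>
      first
        | linear_combination ht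
        | linear_combination -ht
        | linear_combination h1
        | linear_combination -h1
        | linear_combination h2
        | linear_combination -h2
        | linear_combination (3/2 : ℂ) * ht
        | linear_combination (-3/2 : ℂ) * ht
  by_cases ha : A 0 0 = 0
  · by_cases hb : B 0 0 = 0
    · left
      refine ⟨fun i => ?_, fun i => ?_⟩ <;> fin_cases i <;> simp [ha, hb, hA', hB']
    · right
      apply finish
      have h3 : B 0 0 * (A 0 1 * B 1 0 - B 0 1 * A 1 0) = 0 := by
        linear_combination (-(B 1 0)/2) * h1 + (-(B 0 1)/2) * h2
      exact (mul_eq_zero.mp h3).resolve_left hb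
  · right
    apply finish
    have h3 : A 0 0 * (A 0 1 * B 1 0 - B 0 1 * A 1 0) = 0 := by
      linear_combination (-(A 1 0)/2) * h1 + (-(A 0 1)/2) * h2
    exact (mul_eq_zero.mp h3).resolve_left ha
end
end

section
/- Let f, a ∈ ℂ and define χ := (a/(1 + f·conj f)²) · [[−f, 1],[−f², f]] ∈ Matrix (Fin 2) (Fin 2) ℂ. Then the commutator satisfies χ χᴴ − χᴴ χ = (|a|²/(1 + |f|²)³) · [[1 − |f|², 2·conj f],[2f, |f|² − 1]]. -/
open Complex Matrix

noncomputable section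

set_option maxHeartbeats 2000000 in
/-- for `χ = (a/(1+f·f̄)²)·[[−f, 1],[−f², f]]`, the commutator is
`χχᴴ − χᴴχ = (|a|²/(1+|f|²)³)·[[1−|f|², 2f̄],[2f, |f|²−1]]`. -/
theorem stmt11 (f a : ℂ) (χ : Matrix (Fin 2) (Fin 2) ℂ)
    (hχ : χ = (a / (1 + f * (starRingEnd ℂ) f) ^ 2) • !![-f, 1; -f ^ 2, f]) :
    χ * χᴴ - χᴴ * χ
      = ((Complex.normSq a / (1 + Complex.normSq f) ^ 3 : ℝ) : ℂ) •
          !![1 - ((Complex.normSq f : ℝ) : ℂ), 2 * (starRingEnd ℂ) f;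
             2 * f, ((Complex.normSq f : ℝ) : ℂ) - 1] := by
  have hnf : ((Complex.normSq f : ℝ) : ℂ) = f * (starRingEnd ℂ) f := (Complex.mul_conj f).symm
  have hna : ((Complex.normSq a : ℝ) : ℂ) = a * (starRingEnd ℂ) a := (Complex.mul_conj a).symm
  have hd : (1 : ℂ) + f * (starRingEnd ℂ) f ≠ 0 := by
    rw [← hnf]
    intro h
    have h2 : ((1 + Complex.normSq f : ℝ) : ℂ) = 0 := by push_cast; linear_combination h
    have := Complex.ofReal_eq_zero.mp h2
    nlinarith [Complex.normSq_nonneg f]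
  subst hχ
  set c := a / (1 + f * (starRingEnd ℂ) f) ^ 2 with hc
  have hcc : (starRingEnd ℂ) c = (starRingEnd ℂ) a / (1 + f * (starRingEnd ℂ) f) ^ 2 := by
    rw [hc, map_div₀, map_pow, map_add, _root_.map_one, _root_.map_mul, Complex.conj_conj, mul_comm]
  have h1 : (c • !![-f, 1; -f ^ 2, f])ᴴ
      = (starRingEnd ℂ) c • !![-(starRingEnd ℂ) f, -((starRingEnd ℂ) f) ^ 2; 1, (starRingEnd ℂ) f] := by
    ext i j
    fin_cases i <;> fin_cases j <;>
      simp [Matrix.conjTranspose_apply, Matrix.smul_apply, smul_eq_mul, star_pow]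
  rw [h1, smul_mul_assoc, mul_smul_comm, smul_mul_assoc, mul_smul_comm, smul_smul, smul_smul,
    Matrix.mul_fin_two, Matrix.mul_fin_two]
  ext i j
  fin_cases i <;> fin_cases j <;>
    · simp only [Matrix.sub_apply, Matrix.smul_apply, smul_eq_mul,
        Matrix.cons_val', Matrix.cons_val_zero, Matrix.cons_val_one, Matrix.head_cons,
        Matrix.empty_val', Matrix.cons_val_fin_one, Matrix.head_fin_const, Fin.isValue, Matrix.of_apply]
      rw [hc, hcc]
      push_cast [hnf, hna]
      field_simp
      ring
end
end

section
/- Let f, a ∈ ℂ, let χ := (a/(1 + f·conj f)²) · [[−f, 1],[−f², f]], and let u := (1/√(1 + |f|²)) · [[1, −conj f],[f, 1]]. Then u is special unitary (uᴴ u = I and det u = 1) and u conjugates the commutator of χ to diagonal form: uᴴ (χ χᴴ − χᴴ χ) u = (|a|²/(1 + |f|²)²) · [[1, 0],[0, −1]]. -/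
open Complex Matrix

noncomputable section

set_option maxHeartbeats 1000000 in
/-- `u = (1/√(1+|f|²))·[[1, −f̄],[f, 1]]` is special unitary and
diagonalises the commutator of `χ = (a/(1+f·f̄)²)·[[−f, 1],[−f², f]]`:
`uᴴ(χχᴴ − χᴴχ)u = (|a|²/(1+|f|²)²)·[[1,0],[0,−1]]`. -/
theorem stmt12 (f a : ℂ) (χ u : Matrix (Fin 2) (Fin 2) ℂ)
    (hχ : χ = (a / (1 + f * (starRingEnd ℂ) f) ^ 2) • !![-f, 1; -f ^ 2, f])
    (hu : u = (((Real.sqrt (1 + Complex.normSq f))⁻¹ : ℝ) : ℂ) •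
        !![1, -(starRingEnd ℂ) f; f, 1]) :
    uᴴ * u = 1 ∧ u.det = 1
      ∧ uᴴ * (χ * χᴴ - χᴴ * χ) * u
        = ((Complex.normSq a / (1 + Complex.normSq f) ^ 2 : ℝ) : ℂ) • !![1, 0; 0, -1] := by
  have hr : (0:ℝ) < 1 + Complex.normSq f := by
    have := Complex.normSq_nonneg f; linarith
  have hfc : f * (starRingEnd ℂ) f = ((Complex.normSq f : ℝ) : ℂ) := Complex.mul_conj f
  have hca : a * (starRingEnd ℂ) a = ((Complex.normSq a : ℝ) : ℂ) := Complex.mul_conj a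
  have h1ne : (1 : ℂ) + f * (starRingEnd ℂ) f ≠ 0 := by
    rw [hfc]
    exact_mod_cast ne_of_gt (show (0:ℝ) < 1 + Complex.normSq f from hr)
  set t : ℂ := (((Real.sqrt (1 + Complex.normSq f))⁻¹ : ℝ) : ℂ) with htdef
  have hts : starRingEnd ℂ t = t := Complex.conj_ofReal _
  have ht : t ^ 2 = (1 + f * (starRingEnd ℂ) f)⁻¹ := by
    rw [hfc, htdef]
    push_cast
    rw [inv_pow]
    congr 1
    exact_mod_cast Real.sq_sqrt hr.le
  subst hχ hu
  have hM : ∀ X : Matrix (Fin 2) (Fin 2) ℂ,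
      (t • !![1, -(starRingEnd ℂ) f; f, 1])ᴴ * X * (t • !![1, -(starRingEnd ℂ) f; f, 1])
        = (1 + f * (starRingEnd ℂ) f)⁻¹ •
            (!![1, -(starRingEnd ℂ) f; f, 1]ᴴ * X * !![1, -(starRingEnd ℂ) f; f, 1]) := by
    intro X
    simp only [conjTranspose_smul, Complex.star_def, hts, Matrix.smul_mul,
      Matrix.mul_smul, smul_smul, ← sq, ht]
  refine ⟨?_, ?_, ?_⟩
  · have := hM 1
    rw [Matrix.mul_one] at this
    rw [show (t • !![1, -(starRingEnd ℂ) f; f, 1])ᴴ * (t • !![1, -(starRingEnd ℂ) f; f, 1])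
        = (t • !![1, -(starRingEnd ℂ) f; f, 1])ᴴ * 1 * (t • !![1, -(starRingEnd ℂ) f; f, 1]) by
      rw [Matrix.mul_one], hM 1]
    ext i j
    fin_cases i <;> fin_cases j <;>
      simp [Matrix.mul_apply, Fin.sum_univ_two, Matrix.conjTranspose_apply] <;>
      field_simp <;> ring
  · rw [Matrix.det_smul, Matrix.det_fin_two_of]
    simp only [Fintype.card_fin]
    rw [ht]
    field_simp
    ring
  · have hconj : (starRingEnd ℂ) (a / (1 + f * (starRingEnd ℂ) f) ^ 2)
        = (starRingEnd ℂ) a / (1 + f * (starRingEnd ℂ) f) ^ 2 := by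
      rw [map_div₀, map_pow, _root_.map_add, _root_.map_one, _root_.map_mul,
        Complex.conj_conj, mul_comm f]
    have hNH : (!![-f, 1; -f ^ 2, f])ᴴ
        = !![-(starRingEnd ℂ) f, -((starRingEnd ℂ) f)^2; 1, (starRingEnd ℂ) f] := by
      ext i j
      fin_cases i <;> fin_cases j <;>
        simp [Matrix.conjTranspose_apply, _root_.map_mul, pow_two]
    have hMH : (!![1, -(starRingEnd ℂ) f; f, 1])ᴴ
        = !![1, (starRingEnd ℂ) f; -f, 1] := by
      ext i j
      fin_cases i <;> fin_cases j <;> simp [Matrix.conjTranspose_apply]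
    have key : (!![1, -(starRingEnd ℂ) f; f, 1])ᴴ *
        (!![-f, 1; -f ^ 2, f] * (!![-f, 1; -f ^ 2, f])ᴴ
          - (!![-f, 1; -f ^ 2, f])ᴴ * !![-f, 1; -f ^ 2, f]) *
        !![1, -(starRingEnd ℂ) f; f, 1]
        = ((1 + f * (starRingEnd ℂ) f) ^ 3) • !![1, 0; 0, -1] := by
      rw [hNH, hMH]
      ext i j
      fin_cases i <;> fin_cases j <;>
        · simp [Matrix.mul_apply, Fin.sum_univ_two]
          ring
    have hcomm : (a / (1 + f * (starRingEnd ℂ) f) ^ 2) • !![-f, 1; -f ^ 2, f] *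
          ((a / (1 + f * (starRingEnd ℂ) f) ^ 2) • !![-f, 1; -f ^ 2, f])ᴴ
        - ((a / (1 + f * (starRingEnd ℂ) f) ^ 2) • !![-f, 1; -f ^ 2, f])ᴴ *
          ((a / (1 + f * (starRingEnd ℂ) f) ^ 2) • !![-f, 1; -f ^ 2, f])
        = ((a / (1 + f * (starRingEnd ℂ) f) ^ 2) *
            ((starRingEnd ℂ) a / (1 + f * (starRingEnd ℂ) f) ^ 2)) •
          (!![-f, 1; -f ^ 2, f] * (!![-f, 1; -f ^ 2, f])ᴴ
            - (!![-f, 1; -f ^ 2, f])ᴴ * !![-f, 1; -f ^ 2, f]) := by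
      rw [conjTranspose_smul, Complex.star_def, hconj, Matrix.smul_mul, Matrix.smul_mul,
        Matrix.mul_smul, Matrix.mul_smul, smul_smul, smul_smul, smul_sub, mul_comm]
    rw [hcomm]
    have hmid : ∀ (x : ℂ) (D : Matrix (Fin 2) (Fin 2) ℂ),
        (t • !![1, -(starRingEnd ℂ) f; f, 1])ᴴ * (x • D) * (t • !![1, -(starRingEnd ℂ) f; f, 1])
          = x • ((t • !![1, -(starRingEnd ℂ) f; f, 1])ᴴ * D *
              (t • !![1, -(starRingEnd ℂ) f; f, 1])) := by
      intro x D
      simp only [Matrix.mul_smul, Matrix.smul_mul, smul_smul]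
      rw [mul_comm]
    rw [hmid, hM, key, smul_smul, smul_smul]
    congr 1
    push_cast [← hfc, ← hca]
    field_simp
end
end

section
/- Let Ω ⊆ ℂ be open and f : Ω → ℂ holomorphic with f′ nowhere vanishing on Ω. Then the function φ := ln(|f′|²/(1 + |f|²)²) satisfies the Liouville equation ∂_z∂_z̄ φ + 2e^{φ} = 0 on Ω. -/
open Complex Matrix

noncomputable section

namespace S14

lemma fderiv_real_apply {g : ℂ → ℂ} {z : ℂ} (hg : DifferentiableAt ℂ g z) (c : ℂ) :
    fderiv ℝ g z c = c * deriv g z := by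
  rw [(hg.hasFDerivAt.restrictScalars ℝ).fderiv]
  have : fderiv ℂ g z c = c • fderiv ℂ g z 1 := by
    rw [← _root_.map_smul, smul_eq_mul, mul_one]
  simp [this, fderiv_apply_one_eq_deriv, smul_eq_mul]

lemma wdz_holo {g : ℂ → ℂ} {z : ℂ} (hg : DifferentiableAt ℂ g z) :
    wdz g z = deriv g z := by
  rw [wdz, fderiv_real_apply hg 1, fderiv_real_apply hg Complex.I]
  linear_combination (-(deriv g z) / 2) * Complex.I_sq

lemma wdzbar_holo {g : ℂ → ℂ} {z : ℂ} (hg : DifferentiableAt ℂ g z) :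
    wdzbar g z = 0 := by
  rw [wdzbar, fderiv_real_apply hg 1, fderiv_real_apply hg Complex.I]
  linear_combination ((deriv g z) / 2) * Complex.I_sq

lemma hasFDerivAt_conj {g : ℂ → ℂ} {z : ℂ} (hg : DifferentiableAt ℝ g z) :
    HasFDerivAt (fun w => (starRingEnd ℂ) (g w))
      ((Complex.conjCLE.toContinuousLinearMap).comp (fderiv ℝ g z)) z :=
  (Complex.conjCLE.toContinuousLinearMap.hasFDerivAt).comp z hg.hasFDerivAt

lemma diff_conj {g : ℂ → ℂ} {z : ℂ} (hg : DifferentiableAt ℝ g z) :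
    DifferentiableAt ℝ (fun w => (starRingEnd ℂ) (g w)) z :=
  (hasFDerivAt_conj hg).differentiableAt

lemma fderiv_conj_apply {g : ℂ → ℂ} {z : ℂ} (hg : DifferentiableAt ℝ g z) (c : ℂ) :
    fderiv ℝ (fun w => (starRingEnd ℂ) (g w)) z c = (starRingEnd ℂ) (fderiv ℝ g z c) := by
  rw [(hasFDerivAt_conj hg).fderiv]; rfl

lemma wdz_conj {g : ℂ → ℂ} {z : ℂ} (hg : DifferentiableAt ℝ g z) :
    wdz (fun w => (starRingEnd ℂ) (g w)) z = (starRingEnd ℂ) (wdzbar g z) := by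
  have h2 : (starRingEnd ℂ) (2 : ℂ) = 2 := map_ofNat _ 2
  rw [wdz, wdzbar, fderiv_conj_apply hg 1, fderiv_conj_apply hg Complex.I]
  simp only [_root_.map_mul, _root_.map_add, _root_.map_div₀, _root_.map_one, h2, Complex.conj_I]
  ring

lemma wdzbar_conj {g : ℂ → ℂ} {z : ℂ} (hg : DifferentiableAt ℝ g z) :
    wdzbar (fun w => (starRingEnd ℂ) (g w)) z = (starRingEnd ℂ) (wdz g z) := by
  have h2 : (starRingEnd ℂ) (2 : ℂ) = 2 := map_ofNat _ 2
  rw [wdz, wdzbar, fderiv_conj_apply hg 1, fderiv_conj_apply hg Complex.I]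
  simp only [_root_.map_mul, _root_.map_sub, _root_.map_div₀, _root_.map_one, h2, Complex.conj_I]
  ring

lemma wdz_mul {g h : ℂ → ℂ} {z : ℂ} (hg : DifferentiableAt ℝ g z)
    (hh : DifferentiableAt ℝ h z) :
    wdz (fun w => g w * h w) z = wdz g z * h z + g z * wdz h z := by
  rw [wdz, wdz, wdz, fderiv_fun_mul hg hh]
  simp [smul_eq_mul]
  ring

lemma wdzbar_mul {g h : ℂ → ℂ} {z : ℂ} (hg : DifferentiableAt ℝ g z)
    (hh : DifferentiableAt ℝ h z) :
    wdzbar (fun w => g w * h w) z = wdzbar g z * h z + g z * wdzbar h z := by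
  rw [wdzbar, wdzbar, wdzbar, fderiv_fun_mul hg hh]
  simp [smul_eq_mul]
  ring

lemma hasFDerivAt_inv_comp {g : ℂ → ℂ} {z : ℂ} (hg : DifferentiableAt ℝ g z)
    (h0 : g z ≠ 0) :
    HasFDerivAt (fun w => (g w)⁻¹) ((-((g z) ^ 2)⁻¹ : ℂ) • fderiv ℝ g z) z :=
  (hasDerivAt_inv h0).comp_hasFDerivAt z hg.hasFDerivAt

lemma wdz_inv {g : ℂ → ℂ} {z : ℂ} (hg : DifferentiableAt ℝ g z) (h0 : g z ≠ 0) :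
    wdz (fun w => (g w)⁻¹) z = -((g z) ^ 2)⁻¹ * wdz g z := by
  rw [wdz, wdz, (hasFDerivAt_inv_comp hg h0).fderiv]
  simp [smul_eq_mul]
  ring

lemma hasFDerivAt_logC {u : ℂ → ℝ} {z : ℂ} (hu : DifferentiableAt ℝ u z)
    (h0 : u z ≠ 0) :
    HasFDerivAt (fun w => ((Real.log (u w) : ℝ) : ℂ))
      (Complex.ofRealCLM.comp ((u z)⁻¹ • fderiv ℝ u z)) z := by
  have h1 : HasFDerivAt (fun w => Real.log (u w)) ((u z)⁻¹ • fderiv ℝ u z) z :=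
    (Real.hasDerivAt_log h0).comp_hasFDerivAt z hu.hasFDerivAt
  exact (Complex.ofRealCLM.hasFDerivAt).comp z h1

lemma wdz_logC {u : ℂ → ℝ} {z : ℂ} (hu : DifferentiableAt ℝ u z) (h0 : u z ≠ 0) :
    wdz (fun w => ((Real.log (u w) : ℝ) : ℂ)) z
      = ((u z)⁻¹ : ℂ) * wdz (fun w => ((u w : ℝ) : ℂ)) z := by
  have hU : HasFDerivAt (fun w => ((u w : ℝ) : ℂ)) (Complex.ofRealCLM.comp (fderiv ℝ u z)) z :=
    (Complex.ofRealCLM.hasFDerivAt).comp z hu.hasFDerivAt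
  rw [wdz, wdz, (hasFDerivAt_logC hu h0).fderiv, hU.fderiv]
  simp [smul_eq_mul]
  ring

lemma wdzbar_logC {u : ℂ → ℝ} {z : ℂ} (hu : DifferentiableAt ℝ u z) (h0 : u z ≠ 0) :
    wdzbar (fun w => ((Real.log (u w) : ℝ) : ℂ)) z
      = ((u z)⁻¹ : ℂ) * wdzbar (fun w => ((u w : ℝ) : ℂ)) z := by
  have hU : HasFDerivAt (fun w => ((u w : ℝ) : ℂ)) (Complex.ofRealCLM.comp (fderiv ℝ u z)) z :=
    (Complex.ofRealCLM.hasFDerivAt).comp z hu.hasFDerivAt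
  rw [wdzbar, wdzbar, (hasFDerivAt_logC hu h0).fderiv, hU.fderiv]
  simp [smul_eq_mul]
  ring

lemma wdz_congr {g h : ℂ → ℂ} {z : ℂ} (he : g =ᶠ[nhds z] h) : wdz g z = wdz h z := by
  rw [wdz, wdz, he.fderiv_eq]

lemma wdzbar_congr {g h : ℂ → ℂ} {z : ℂ} (he : g =ᶠ[nhds z] h) :
    wdzbar g z = wdzbar h z := by
  rw [wdzbar, wdzbar, he.fderiv_eq]

lemma wdz_sub_const_mul {g h : ℂ → ℂ} {z : ℂ} (hg : DifferentiableAt ℝ g z)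
    (hh : DifferentiableAt ℝ h z) :
    wdz (fun w => g w - 2 * h w) z = wdz g z - 2 * wdz h z := by
  have : fderiv ℝ (fun w => g w - 2 * h w) z = fderiv ℝ g z - (2:ℂ) • fderiv ℝ h z := by
    rw [fderiv_fun_sub hg (hh.const_mul 2), fderiv_const_mul hh]
  rw [wdz, wdz, wdz, this]
  simp [smul_eq_mul]
  ring

lemma wdzbar_sub_const_mul {g h : ℂ → ℂ} {z : ℂ} (hg : DifferentiableAt ℝ g z)
    (hh : DifferentiableAt ℝ h z) :
    wdzbar (fun w => g w - 2 * h w) z = wdzbar g z - 2 * wdzbar h z := by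
  have : fderiv ℝ (fun w => g w - 2 * h w) z = fderiv ℝ g z - (2:ℂ) • fderiv ℝ h z := by
    rw [fderiv_fun_sub hg (hh.const_mul 2), fderiv_const_mul hh]
  rw [wdzbar, wdzbar, wdzbar, this]
  simp [smul_eq_mul]
  ring

end S14

/-- for `f` holomorphic on an open `Ω ⊆ ℂ` with `f′` nowhere
vanishing, `φ := ln(|f′|²/(1+|f|²)²)` satisfies the Liouville equation
`∂_z∂_z̄φ + 2e^φ = 0` on `Ω`. -/
theorem stmt14 (Ω : Set ℂ) (hΩ : IsOpen Ω) (f : ℂ → ℂ)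
    (hf : DifferentiableOn ℂ f Ω) (hf' : ∀ z ∈ Ω, deriv f z ≠ 0)
    (φ : ℂ → ℝ)
    (hφ : ∀ z, φ z = Real.log (Complex.normSq (deriv f z) / (1 + Complex.normSq (f z)) ^ 2)) :
    ∀ z ∈ Ω,
      wdz (fun w => wdzbar (fun v => ((φ v : ℝ) : ℂ)) w) z
        + 2 * ((Real.exp (φ z) : ℝ) : ℂ) = 0 := by
  intro z hz
  have hAn : AnalyticOnNhd ℂ f Ω := hf.analyticOnNhd hΩ
  have hAn1 : AnalyticOnNhd ℂ (deriv f) Ω := hAn.deriv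
  have hAn2 : AnalyticOnNhd ℂ (deriv (deriv f)) Ω := hAn1.deriv
  set f1 := deriv f with hf1def
  set f2 := deriv (deriv f) with hf2def
  -- real auxiliary functions
  set u : ℂ → ℝ := fun w => Complex.normSq (f1 w) with hudef
  set v : ℂ → ℝ := fun w => 1 + Complex.normSq (f w) with hvdef
  -- complex versions as products
  have hUeq : (fun w => ((u w : ℝ) : ℂ)) = fun w => f1 w * (starRingEnd ℂ) (f1 w) := by
    funext w; exact (Complex.mul_conj _).symm
  have hVeq : (fun w => ((v w : ℝ) : ℂ)) = fun w => 1 + f w * (starRingEnd ℂ) (f w) := by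
    funext w; simp [hvdef, Complex.mul_conj]
  -- basic differentiability at points of Ω
  have hdf : ∀ w ∈ Ω, DifferentiableAt ℝ f w := fun w hw =>
    ((hAn w hw).differentiableAt).restrictScalars ℝ
  have hdf1 : ∀ w ∈ Ω, DifferentiableAt ℝ f1 w := fun w hw =>
    ((hAn1 w hw).differentiableAt).restrictScalars ℝ
  have hdf2 : ∀ w ∈ Ω, DifferentiableAt ℝ f2 w := fun w hw =>
    ((hAn2 w hw).differentiableAt).restrictScalars ℝ
  have hdU : ∀ w ∈ Ω, DifferentiableAt ℝ (fun w => ((u w : ℝ) : ℂ)) w := by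
    intro w hw; rw [hUeq]
    exact (hdf1 w hw).mul (S14.diff_conj (hdf1 w hw))
  have hdV : ∀ w ∈ Ω, DifferentiableAt ℝ (fun w => ((v w : ℝ) : ℂ)) w := by
    intro w hw; rw [hVeq]
    exact (differentiableAt_const _).add ((hdf w hw).mul (S14.diff_conj (hdf w hw)))
  have hdu : ∀ w ∈ Ω, DifferentiableAt ℝ u w := by
    intro w hw
    have : u = fun w => Complex.reCLM (((u w : ℝ) : ℂ)) := by funext w; simp
    rw [this]
    exact (Complex.reCLM.differentiableAt).comp w (hdU w hw)
  have hdv : ∀ w ∈ Ω, DifferentiableAt ℝ v w := by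
    intro w hw
    have : v = fun w => Complex.reCLM (((v w : ℝ) : ℂ)) := by funext w; simp
    rw [this]
    exact (Complex.reCLM.differentiableAt).comp w (hdV w hw)
  -- positivity
  have hu0 : ∀ w ∈ Ω, 0 < u w := fun w hw => Complex.normSq_pos.2 (hf' w hw)
  have hv0 : ∀ w ∈ Ω, 0 < v w := fun w hw => by
    have := Complex.normSq_nonneg (f w); simp only [hvdef]; linarith
  -- the coerced φ agrees on Ω with log u - 2 log v
  have hψ : ∀ w ∈ Ω,
      ((φ w : ℝ) : ℂ) = ((Real.log (u w) : ℝ) : ℂ) - 2 * ((Real.log (v w) : ℝ) : ℂ) := by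
    intro w hw
    have : φ w = Real.log (u w) - 2 * Real.log (v w) := by
      rw [hφ w, Real.log_div (hu0 w hw).ne' (pow_pos (hv0 w hw) 2).ne', Real.log_pow]
      push_cast; ring
    rw [this]; push_cast; ring
  -- first-level Wirtinger derivatives
  have hwU : ∀ w ∈ Ω, wdzbar (fun w => ((u w : ℝ) : ℂ)) w = f1 w * (starRingEnd ℂ) (f2 w) := by
    intro w hw
    rw [hUeq, S14.wdzbar_mul (hdf1 w hw) (S14.diff_conj (hdf1 w hw)),
      S14.wdzbar_holo ((hAn1 w hw).differentiableAt),
      S14.wdzbar_conj (hdf1 w hw), S14.wdz_holo ((hAn1 w hw).differentiableAt)]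
    ring
  have hwV : ∀ w ∈ Ω, wdzbar (fun w => ((v w : ℝ) : ℂ)) w = f w * (starRingEnd ℂ) (f1 w) := by
    intro w hw
    have hc : wdzbar (fun w => (1 : ℂ) + f w * (starRingEnd ℂ) (f w)) w
        = wdzbar (fun w => f w * (starRingEnd ℂ) (f w)) w := by
      rw [wdzbar, wdzbar, fderiv_const_add]
    rw [hVeq, hc, S14.wdzbar_mul (hdf w hw) (S14.diff_conj (hdf w hw)),
      S14.wdzbar_holo ((hAn w hw).differentiableAt),
      S14.wdzbar_conj (hdf w hw), S14.wdz_holo ((hAn w hw).differentiableAt)]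
    ring
  -- the first-level derivative function
  set G : ℂ → ℂ := fun w =>
    (((u w : ℝ) : ℂ))⁻¹ * (f1 w * (starRingEnd ℂ) (f2 w))
      - 2 * ((((v w : ℝ) : ℂ))⁻¹ * (f w * (starRingEnd ℂ) (f1 w))) with hGdef
  have hG : ∀ w ∈ Ω, wdzbar (fun x => ((φ x : ℝ) : ℂ)) w = G w := by
    intro w hw
    have he : (fun x => ((φ x : ℝ) : ℂ)) =ᶠ[nhds w]
        (fun x => ((Real.log (u x) : ℝ) : ℂ) - 2 * ((Real.log (v x) : ℝ) : ℂ)) :=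
      Filter.eventuallyEq_of_mem (hΩ.mem_nhds hw) (fun x hx => hψ x hx)
    rw [S14.wdzbar_congr he,
      S14.wdzbar_sub_const_mul
        (S14.hasFDerivAt_logC (hdu w hw) (hu0 w hw).ne').differentiableAt
        (S14.hasFDerivAt_logC (hdv w hw) (hv0 w hw).ne').differentiableAt,
      S14.wdzbar_logC (hdu w hw) (hu0 w hw).ne',
      S14.wdzbar_logC (hdv w hw) (hv0 w hw).ne', hwU w hw, hwV w hw, hGdef]
  -- second level: replace the inner function by G near z
  have hcongr : wdz (fun w => wdzbar (fun x => ((φ x : ℝ) : ℂ)) w) z = wdz G z :=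
    S14.wdz_congr (Filter.eventuallyEq_of_mem (hΩ.mem_nhds hz) (fun x hx => hG x hx))
  -- notation for values at z
  have hUz : ((u z : ℝ) : ℂ) = f1 z * (starRingEnd ℂ) (f1 z) := congrFun hUeq z
  have hVz : ((v z : ℝ) : ℂ) = 1 + f z * (starRingEnd ℂ) (f z) := congrFun hVeq z
  have hUz0 : ((u z : ℝ) : ℂ) ≠ 0 := by
    simpa using (hu0 z hz).ne'
  have hVz0 : ((v z : ℝ) : ℂ) ≠ 0 := by
    simpa using (hv0 z hz).ne'
  -- wdz of the pieces at z
  have hIu : wdz (fun w => (((u w : ℝ) : ℂ))⁻¹) z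
      = -(((u z : ℝ) : ℂ) ^ 2)⁻¹ * (f2 z * (starRingEnd ℂ) (f1 z)) := by
    rw [S14.wdz_inv (hdU z hz) hUz0]
    congr 1
    rw [hUeq, S14.wdz_mul (hdf1 z hz) (S14.diff_conj (hdf1 z hz)),
      S14.wdz_holo ((hAn1 z hz).differentiableAt),
      S14.wdz_conj (hdf1 z hz), S14.wdzbar_holo ((hAn1 z hz).differentiableAt)]
    simp
    exact Or.inl rfl
  have hIv : wdz (fun w => (((v w : ℝ) : ℂ))⁻¹) z
      = -(((v z : ℝ) : ℂ) ^ 2)⁻¹ * (f1 z * (starRingEnd ℂ) (f z)) := by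
    rw [S14.wdz_inv (hdV z hz) hVz0]
    congr 1
    have hc : wdz (fun w => (1 : ℂ) + f w * (starRingEnd ℂ) (f w)) z
        = wdz (fun w => f w * (starRingEnd ℂ) (f w)) z := by
      rw [wdz, wdz, fderiv_const_add]
    rw [hVeq, hc, S14.wdz_mul (hdf z hz) (S14.diff_conj (hdf z hz)),
      S14.wdz_holo ((hAn z hz).differentiableAt),
      S14.wdz_conj (hdf z hz), S14.wdzbar_holo ((hAn z hz).differentiableAt)]
    simp
    exact Or.inl rfl
  have hP : wdz (fun w => f1 w * (starRingEnd ℂ) (f2 w)) z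
      = f2 z * (starRingEnd ℂ) (f2 z) := by
    rw [S14.wdz_mul (hdf1 z hz) (S14.diff_conj (hdf2 z hz)),
      S14.wdz_holo ((hAn1 z hz).differentiableAt),
      S14.wdz_conj (hdf2 z hz), S14.wdzbar_holo ((hAn2 z hz).differentiableAt)]
    simp
    exact Or.inl rfl
  have hQ : wdz (fun w => f w * (starRingEnd ℂ) (f1 w)) z
      = f1 z * (starRingEnd ℂ) (f1 z) := by
    rw [S14.wdz_mul (hdf z hz) (S14.diff_conj (hdf1 z hz)),
      S14.wdz_holo ((hAn z hz).differentiableAt),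
      S14.wdz_conj (hdf1 z hz), S14.wdzbar_holo ((hAn1 z hz).differentiableAt)]
    simp
    exact Or.inl rfl
  -- differentiability of the pieces at z
  have hdIu : DifferentiableAt ℝ (fun w => (((u w : ℝ) : ℂ))⁻¹) z :=
    (S14.hasFDerivAt_inv_comp (hdU z hz) hUz0).differentiableAt
  have hdIv : DifferentiableAt ℝ (fun w => (((v w : ℝ) : ℂ))⁻¹) z :=
    (S14.hasFDerivAt_inv_comp (hdV z hz) hVz0).differentiableAt
  have hdP : DifferentiableAt ℝ (fun w => f1 w * (starRingEnd ℂ) (f2 w)) z :=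
    (hdf1 z hz).mul (S14.diff_conj (hdf2 z hz))
  have hdQ : DifferentiableAt ℝ (fun w => f w * (starRingEnd ℂ) (f1 w)) z :=
    (hdf z hz).mul (S14.diff_conj (hdf1 z hz))
  -- compute wdz G z
  have hGz : wdz G z = -2 * (f1 z * (starRingEnd ℂ) (f1 z)) * ((((v z : ℝ) : ℂ)) ^ 2)⁻¹ := by
    rw [hGdef, S14.wdz_sub_const_mul (hdIu.fun_mul hdP) (hdIv.fun_mul hdQ),
      S14.wdz_mul hdIu hdP, S14.wdz_mul hdIv hdQ, hIu, hIv, hP, hQ]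
    rw [hUz, hVz]
    have h1 : f1 z ≠ 0 := hf' z hz
    have h1c : (starRingEnd ℂ) (f1 z) ≠ 0 := by simpa using h1
    have hVz0' : (1 : ℂ) + f z * (starRingEnd ℂ) (f z) ≠ 0 := by rw [← hVz]; exact hVz0
    field_simp
    ring
  -- the exponential term
  have hexp : ((Real.exp (φ z) : ℝ) : ℂ)
      = ((u z : ℝ) : ℂ) * ((((v z : ℝ) : ℂ)) ^ 2)⁻¹ := by
    have : Real.exp (φ z) = u z / (v z) ^ 2 := by
      rw [hφ z, Real.exp_log (div_pos (hu0 z hz) (pow_pos (hv0 z hz) 2))]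
    rw [this]
    push_cast
    ring
  rw [hcongr, hGz, hexp, hUz]
  ring
end
end
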